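/- arXiv:2410.10361 — 5 statements merged into one kernel-verified Lean document; each statement's English description precedes it below -/
import Mathlib

section
/- Laplace's principle: Let E : ℝ^d → ℝ be continuous and bounded below, and let μ be a probability measure on ℝ^d with compact support. Then lim_{α → ∞} ( -(1/α) · log ( ∫ exp(-α E(x)) dμ(x) ) ) = inf_{x ∈ supp(μ)} E(x). -/
/-!
Write `m` for the infimum of `E` on the support. Since `μ` is concentrated on its support,
`∫ exp (-α E) dμ ≤ exp (-α m)`, so `-(1/α) log ∫ exp (-α E) dμ ≥ m`. Conversely, for `t > m` the
open set `U = {E < t}` meets the support, hence has positive mass, and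
`∫ exp (-α E) dμ ≥ μ(U) exp (-α t)` gives the upper bound `t - log μ(U) / α`, which tends to `t`.
-/

open MeasureTheory Filter

/-- The support of a measure: points all of whose neighborhoods have positive mass. -/
def measureSupport {X : Type*} [TopologicalSpace X] [MeasurableSpace X]
    (μ : Measure X) : Set X :=
  {x | ∀ U ∈ nhds x, 0 < μ U}

open Set Topology

section LaplacePrinciple

variable {X : Type*} [MeasurableSpace X] {μ : Measure X}
  {E : X → ℝ} {α : ℝ}

theorem measureSupport_nonempty [TopologicalSpace X] [NeZero μ]
    (hμsupp : μ (measureSupport μ)ᶜ = 0) :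
    (measureSupport μ).Nonempty := by
  by_contra h
  rw [not_nonempty_iff_eq_empty.1 h, compl_empty] at hμsupp
  exact NeZero.ne μ (Measure.measure_univ_eq_zero.1 hμsupp)

theorem integrable_exp_neg_mul_of_le [IsFiniteMeasure μ] (hE : Measurable E) {b : ℝ}
    (hb : ∀ x, b ≤ E x) (hα : 0 ≤ α) :
    Integrable (fun x => Real.exp (-α * E x)) μ := by
  refine (integrable_const (Real.exp (-α * b))).mono'
    (by fun_prop : Measurable fun x => Real.exp (-α * E x)).aestronglyMeasurable ?_
  refine .of_forall fun x => ?_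
  rw [Real.norm_eq_abs, Real.abs_exp, Real.exp_le_exp]
  nlinarith [hb x]

theorem integral_exp_neg_mul_pos [NeZero μ]
    (hint : Integrable (fun x => Real.exp (-α * E x)) μ) :
    0 < ∫ x, Real.exp (-α * E x) ∂μ := by
  refine (integral_pos_iff_support_of_nonneg (fun x => (Real.exp_pos _).le) hint).2 ?_
  simp [Function.support, (Real.exp_pos _).ne', NeZero.ne μ]

theorem integral_exp_neg_mul_le [IsProbabilityMeasure μ] {m : ℝ} (hm : ∀ᵐ x ∂μ, m ≤ E x)
    (hα : 0 ≤ α) :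
    ∫ x, Real.exp (-α * E x) ∂μ ≤ Real.exp (-α * m) := by
  calc ∫ x, Real.exp (-α * E x) ∂μ ≤ ∫ _, Real.exp (-α * m) ∂μ := by
        refine integral_mono_of_nonneg (.of_forall fun x => (Real.exp_pos _).le)
          (integrable_const _) ?_
        filter_upwards [hm] with x hx
        exact Real.exp_le_exp.2 (by nlinarith)
    _ = Real.exp (-α * m) := by simp

theorem le_neg_inv_mul_log_integral_exp [IsProbabilityMeasure μ] {m : ℝ}
    (hm : ∀ᵐ x ∂μ, m ≤ E x) (hα : 0 < α) (hpos : 0 < ∫ x, Real.exp (-α * E x) ∂μ) :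
    m ≤ -(1 / α) * Real.log (∫ x, Real.exp (-α * E x) ∂μ) := by
  have hlog : Real.log (∫ x, Real.exp (-α * E x) ∂μ) ≤ -α * m :=
    (Real.log_le_iff_le_exp hpos).2 (integral_exp_neg_mul_le hm hα.le)
  rw [neg_mul, one_div, ← mul_neg, inv_mul_eq_div, le_div_iff₀ hα]
  linarith

theorem exp_neg_mul_mul_measureReal_le_integral_exp [IsFiniteMeasure μ] {U : Set X} {t : ℝ}
    (hU : MeasurableSet U) (hEU : ∀ x ∈ U, E x ≤ t) (hα : 0 ≤ α)
    (hint : Integrable (fun x => Real.exp (-α * E x)) μ) :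
    Real.exp (-α * t) * μ.real U ≤ ∫ x, Real.exp (-α * E x) ∂μ :=
  calc Real.exp (-α * t) * μ.real U ≤ ∫ x in U, Real.exp (-α * E x) ∂μ :=
        setIntegral_ge_of_const_le_real hU (measure_ne_top μ U)
          (fun x hx => Real.exp_le_exp.2 (by nlinarith [hEU x hx])) hint.integrableOn
    _ ≤ ∫ x, Real.exp (-α * E x) ∂μ :=
        setIntegral_le_integral hint (.of_forall fun x => (Real.exp_pos _).le)

theorem neg_inv_mul_log_integral_exp_le [IsFiniteMeasure μ] {U : Set X} {t : ℝ}
    (hU : MeasurableSet U) (hμU : 0 < μ.real U) (hEU : ∀ x ∈ U, E x ≤ t) (hα : 0 < α)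
    (hint : Integrable (fun x => Real.exp (-α * E x)) μ) :
    -(1 / α) * Real.log (∫ x, Real.exp (-α * E x) ∂μ) ≤ t - Real.log (μ.real U) / α := by
  have hlog : -α * t + Real.log (μ.real U) ≤ Real.log (∫ x, Real.exp (-α * E x) ∂μ) := by
    rw [← Real.log_exp (-α * t), ← Real.log_mul (Real.exp_pos _).ne' hμU.ne']
    exact Real.log_le_log (by positivity)
      (exp_neg_mul_mul_measureReal_le_integral_exp hU hEU hα.le hint)
  rw [neg_mul, one_div, ← mul_neg, inv_mul_eq_div, div_le_iff₀ hα, sub_mul,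
    div_mul_cancel₀ _ hα.ne']
  linarith

theorem eventually_neg_inv_mul_log_integral_exp_lt [TopologicalSpace X] [OpensMeasurableSpace X]
    [IsFiniteMeasure μ] (hE : Continuous E) {b : ℝ} (hb : ∀ x, b ≤ E x) {x₀ : X}
    (hx₀ : x₀ ∈ measureSupport μ) {c : ℝ} (hc : E x₀ < c) :
    ∀ᶠ α in atTop, -(1 / α) * Real.log (∫ x, Real.exp (-α * E x) ∂μ) < c := by
  obtain ⟨t, hx₀t, htc⟩ := exists_between hc
  set U := E ⁻¹' Iio t
  have hUopen : IsOpen U := isOpen_Iio.preimage hE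
  have hμU : 0 < μ.real U :=
    ENNReal.toReal_pos (hx₀ U (hUopen.mem_nhds hx₀t)).ne' (measure_ne_top μ U)
  have hlim : Tendsto (fun α : ℝ => t - Real.log (μ.real U) / α) atTop (𝓝 t) := by
    simpa using (tendsto_const_nhds (x := t)).sub
      ((tendsto_const_nhds (x := Real.log (μ.real U))).div_atTop tendsto_id)
  filter_upwards [hlim.eventually (gt_mem_nhds htc), eventually_gt_atTop 0] with α hαc hα
  exact (neg_inv_mul_log_integral_exp_le hUopen.measurableSet hμU
    (fun x hx => (mem_Iio.1 hx).le) hα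
    (integrable_exp_neg_mul_of_le hE.measurable hb hα.le)).trans_lt hαc

theorem tendsto_neg_inv_mul_log_integral_exp [TopologicalSpace X] [OpensMeasurableSpace X]
    [IsProbabilityMeasure μ] (hE : Continuous E) (hbdd : BddBelow (range E))
    (hμsupp : μ (measureSupport μ)ᶜ = 0) :
    Tendsto (fun α : ℝ => -(1 / α) * Real.log (∫ x, Real.exp (-α * E x) ∂μ))
      atTop (𝓝 (sInf (E '' measureSupport μ))) := by
  obtain ⟨b, hb⟩ : ∃ b, ∀ x, b ≤ E x := by simpa [bddBelow_def] using hbdd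
  have hbddS : BddBelow (E '' measureSupport μ) := ⟨b, forall_mem_image.2 fun x _ => hb x⟩
  have hm : ∀ᵐ x ∂μ, sInf (E '' measureSupport μ) ≤ E x :=
    (ae_iff.2 hμsupp).mono fun x hx => csInf_le hbddS (mem_image_of_mem E hx)
  rw [tendsto_order]
  refine ⟨fun a ha => ?_, fun c hc => ?_⟩
  · filter_upwards [eventually_gt_atTop 0] with α hα
    exact ha.trans_le (le_neg_inv_mul_log_integral_exp hm hα
      (integral_exp_neg_mul_pos (integrable_exp_neg_mul_of_le hE.measurable hb hα.le)))
  · obtain ⟨_, ⟨x₀, hx₀, rfl⟩, hx₀c⟩ :=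
      exists_lt_of_csInf_lt ((measureSupport_nonempty hμsupp).image E) hc
    exact eventually_neg_inv_mul_log_integral_exp_lt hE hb hx₀ hx₀c

end LaplacePrinciple

theorem stmt1_general {d : ℕ} (E : EuclideanSpace ℝ (Fin d) → ℝ)
    (hE : Continuous E) (hbdd : BddBelow (Set.range E))
    (μ : Measure (EuclideanSpace ℝ (Fin d))) [IsProbabilityMeasure μ]
    (hμsupp : μ (measureSupport μ)ᶜ = 0) :
    Tendsto (fun α : ℝ => -(1 / α) * Real.log (∫ x, Real.exp (-α * E x) ∂μ))
      atTop (nhds (sInf (E '' measureSupport μ))) :=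
  tendsto_neg_inv_mul_log_integral_exp hE hbdd hμsupp

/-- **Laplace's principle.** For `E : ℝ^d → ℝ` continuous and bounded below
and `μ` a compactly supported probability measure on `ℝ^d`,
`lim_{α → ∞} -(1/α) log ∫ e^{-α E} dμ = inf_{supp μ} E`. -/
theorem stmt1 {d : ℕ} (E : EuclideanSpace ℝ (Fin d) → ℝ)
    (hE : Continuous E) (hbdd : BddBelow (Set.range E))
    (μ : Measure (EuclideanSpace ℝ (Fin d))) [IsProbabilityMeasure μ]
    (hsupp : IsCompact (measureSupport μ)) (hμsupp : μ (measureSupport μ)ᶜ = 0) :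
    Tendsto (fun α : ℝ => -(1 / α) * Real.log (∫ x, Real.exp (-α * E x) ∂μ))
      atTop (nhds (sInf (E '' measureSupport μ))) :=
  stmt1_general E hE hbdd μ hμsupp
end

section
/- Local Lipschitz estimate for the consensus drift: Let E : ℝ^d → ℝ satisfy |E(x) − E(y)| ≤ L_E (1 + |x| + |y|) |x − y| for all x, y, and let R > 0. Set Ē_R = max_{|x| ≤ R} E(x) and 𝔼_R = min_{|x| ≤ R} E(x). Then for all X, X̂ ∈ (ℝ^d)^N with |X|, |X̂| ≤ R and every i ∈ {1,…,N}, |F^i(X) − F^i(X̂)| ≤ 2 (2 + R L_E (1 + 2R) α exp(α(Ē_R − 𝔼_R))) · max_j |X^j − X̂^j|, where F^i(X) = X^i − X_α(X) and X_α(X) = (Σ_j X^j e^{-αE(X^j)}) / (Σ_j e^{-αE(X^j)}). -/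
open Finset Metric

/-!
The consensus point `X_α(X)` is the center of mass of the particles with the Gibbs weights
`w_j = exp (-α E (X^j))`. Moving the points with the weights fixed moves it by at most
`max_j |X^j - X̂^j|`. Changing the weights from `ŵ` to `w` moves it by
`(∑ w)⁻¹ ∑ (w_j - ŵ_j) (X̂^j - X_α(X̂))`, hence by at most `2 ρ R` as soon as
`|w_j - ŵ_j| ≤ ρ w_j`. Since all energies lie in `[𝔼_R, Ē_R]`, the Gibbs weights are Lipschitz
relative to their own size with constant `α exp (α (Ē_R - 𝔼_R))`, and the local Lipschitz bound on
`E` gives `ρ = α exp (α (Ē_R - 𝔼_R)) L_E (1 + 2R) max_j |X^j - X̂^j|`.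
-/

namespace Finset

variable {ι V : Type*} [SeminormedAddCommGroup V] [NormedSpace ℝ V] {t : Finset ι} {w v : ι → ℝ}

lemma norm_centerMass_le {z : ι → V} {R : ℝ} (hw : ∀ i ∈ t, 0 ≤ w i) (hS : 0 < ∑ i ∈ t, w i)
    (hz : ∀ i ∈ t, ‖z i‖ ≤ R) : ‖t.centerMass w z‖ ≤ R :=
  mem_closedBall_zero_iff.mp <| (convex_closedBall 0 R).centerMass_mem hw hS fun i hi =>
    mem_closedBall_zero_iff.mpr (hz i hi)

lemma centerMass_sub_centerMass (x y : ι → V) :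
    t.centerMass w x - t.centerMass w y = t.centerMass w (x - y) := by
  simp only [centerMass, Pi.sub_apply, smul_sub, sum_sub_distrib]

lemma centerMass_sub_centerMass_weights (z : ι → V) (hw : ∑ i ∈ t, w i ≠ 0)
    (hv : ∑ i ∈ t, v i ≠ 0) :
    t.centerMass w z - t.centerMass v z =
      (∑ i ∈ t, w i)⁻¹ • ∑ i ∈ t, (w i - v i) • (z i - t.centerMass v z) := by
  have hmass : (∑ i ∈ t, v i) • t.centerMass v z = ∑ i ∈ t, v i • z i := by
    rw [centerMass, smul_inv_smul₀ hv]
  simp only [smul_sub, sub_smul, sum_sub_distrib, ← sum_smul, hmass, inv_smul_smul₀ hw]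
  unfold centerMass
  abel

lemma norm_centerMass_sub_centerMass_weights_le {z : ι → V} {R ρ : ℝ} (hv : ∀ i ∈ t, 0 ≤ v i)
    (hSw : 0 < ∑ i ∈ t, w i) (hSv : 0 < ∑ i ∈ t, v i)
    (hwv : ∀ i ∈ t, |w i - v i| ≤ ρ * w i) (hz : ∀ i ∈ t, ‖z i‖ ≤ R) :
    ‖t.centerMass w z - t.centerMass v z‖ ≤ 2 * ρ * R := by
  have hm := norm_centerMass_le hv hSv hz
  have hsum : ‖∑ i ∈ t, (w i - v i) • (z i - t.centerMass v z)‖ ≤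
      (∑ i ∈ t, w i) * (2 * ρ * R) := by
    calc ‖∑ i ∈ t, (w i - v i) • (z i - t.centerMass v z)‖
        ≤ ∑ i ∈ t, |w i - v i| * ‖z i - t.centerMass v z‖ :=
          norm_sum_le_of_le t fun i _ => by rw [norm_smul, Real.norm_eq_abs]
      _ ≤ ∑ i ∈ t, ρ * w i * (R + R) := sum_le_sum fun i hi =>
          mul_le_mul (hwv i hi) ((norm_sub_le (z i) _).trans (add_le_add (hz i hi) hm))
            (norm_nonneg _) ((abs_nonneg _).trans (hwv i hi))
      _ = (∑ i ∈ t, w i) * (2 * ρ * R) := by rw [sum_mul]; exact sum_congr rfl fun _ _ => by ring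
  rw [centerMass_sub_centerMass_weights z hSw.ne' hSv.ne', norm_smul, Real.norm_eq_abs,
    abs_inv, abs_of_pos hSw, inv_mul_le_iff₀ hSw]
  exact hsum

lemma norm_centerMass_sub_centerMass_le {x y : ι → V} {M R ρ : ℝ}
    (hw : ∀ i ∈ t, 0 ≤ w i) (hv : ∀ i ∈ t, 0 ≤ v i)
    (hSw : 0 < ∑ i ∈ t, w i) (hSv : 0 < ∑ i ∈ t, v i)
    (hwv : ∀ i ∈ t, |w i - v i| ≤ ρ * w i)
    (hxy : ∀ i ∈ t, ‖x i - y i‖ ≤ M) (hy : ∀ i ∈ t, ‖y i‖ ≤ R) :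
    ‖t.centerMass w x - t.centerMass v y‖ ≤ M + 2 * ρ * R := by
  rw [← sub_add_sub_cancel _ (t.centerMass w y), centerMass_sub_centerMass]
  exact norm_add_le_of_le (norm_centerMass_le hw hSw hxy)
    (norm_centerMass_sub_centerMass_weights_le hv hSw hSv hwv hy)

end Finset

namespace Real

lemma abs_exp_neg_mul_sub_le {α m a b : ℝ} (hα : 0 ≤ α) (ha : m ≤ a) (hb : m ≤ b) :
    |exp (-α * a) - exp (-α * b)| ≤ α * exp (-α * m) * |a - b| := by
  wlog hba : b ≤ a generalizing a b
  · rw [abs_sub_comm, abs_sub_comm a b]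
    exact this hb ha (le_of_not_ge hba)
  have hsplit : exp (-α * a) = exp (-α * b) * exp (-(α * (a - b))) := by
    rw [← exp_add]; ring_nf
  have hle : exp (-α * a) ≤ exp (-α * b) := exp_le_exp.mpr (by nlinarith)
  have hb' : exp (-α * b) ≤ exp (-α * m) := exp_le_exp.mpr (by nlinarith)
  have hαab : 0 ≤ α * (a - b) := mul_nonneg hα (sub_nonneg.mpr hba)
  rw [abs_of_nonpos (sub_nonpos.mpr hle), abs_of_nonneg (sub_nonneg.mpr hba), neg_sub, hsplit]
  calc exp (-α * b) - exp (-α * b) * exp (-(α * (a - b)))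
      = exp (-α * b) * (1 - exp (-(α * (a - b)))) := by ring
    _ ≤ exp (-α * m) * (α * (a - b)) := by
        gcongr
        · exact sub_nonneg.mpr (exp_le_one_iff.mpr (neg_nonpos.mpr hαab))
        · linarith [one_sub_le_exp_neg (α * (a - b))]
    _ = α * exp (-α * m) * (a - b) := by ring

lemma abs_exp_neg_mul_sub_le_mul_exp_neg_mul {α m m' a b : ℝ} (hα : 0 ≤ α) (ha : m ≤ a)
    (ha' : a ≤ m') (hb : m ≤ b) :
    |exp (-α * a) - exp (-α * b)| ≤ α * exp (α * (m' - m)) * |a - b| * exp (-α * a) := by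
  have hm : exp (-α * m) ≤ exp (α * (m' - m)) * exp (-α * a) := by
    rw [← exp_add, exp_le_exp]; nlinarith
  calc |exp (-α * a) - exp (-α * b)| ≤ α * exp (-α * m) * |a - b| :=
        abs_exp_neg_mul_sub_le hα ha hb
    _ ≤ α * (exp (α * (m' - m)) * exp (-α * a)) * |a - b| := by gcongr
    _ = α * exp (α * (m' - m)) * |a - b| * exp (-α * a) := by ring

end Real

section LocallyLipschitz

variable {V : Type*} [SeminormedAddCommGroup V] {E : V → ℝ} {L : ℝ}

lemma nonneg_of_abs_sub_le_mul_norm_sub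
    (hE : ∀ x y, |E x - E y| ≤ L * (1 + ‖x‖ + ‖y‖) * ‖x - y‖) {x y : V} (hxy : 0 < ‖x - y‖) :
    0 ≤ L := by
  have hpos : 0 < (1 + ‖x‖ + ‖y‖) * ‖x - y‖ := by positivity
  have := (abs_nonneg _).trans (hE x y)
  rw [mul_assoc] at this
  exact nonneg_of_mul_nonneg_left this hpos

lemma abs_sub_le_of_norm_le (hL : 0 ≤ L)
    (hE : ∀ x y, |E x - E y| ≤ L * (1 + ‖x‖ + ‖y‖) * ‖x - y‖) {R : ℝ} {x y : V}
    (hx : ‖x‖ ≤ R) (hy : ‖y‖ ≤ R) : |E x - E y| ≤ L * (1 + 2 * R) * ‖x - y‖ :=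
  (hE x y).trans (by gcongr L * ?_ * _; linarith)

lemma isBounded_image_closedBall_zero
    (hE : ∀ x y, |E x - E y| ≤ L * (1 + ‖x‖ + ‖y‖) * ‖x - y‖) (R : ℝ) :
    Bornology.IsBounded (E '' closedBall 0 R) := by
  refine (isBounded_closedBall (x := E 0) (r := |L| * (1 + R) * R)).subset ?_
  rintro _ ⟨x, hx, rfl⟩
  rw [mem_closedBall_zero_iff] at hx
  rw [mem_closedBall, Real.dist_eq]
  calc |E x - E 0| ≤ L * (1 + ‖x‖ + ‖(0 : V)‖) * ‖x - 0‖ := hE x 0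
    _ ≤ |L| * (1 + ‖x‖) * ‖x‖ := by
        simp only [norm_zero, add_zero, sub_zero]
        gcongr
        exact le_abs_self L
    _ ≤ |L| * (1 + R) * R := by have := (norm_nonneg x).trans hx; gcongr

lemma abs_exp_neg_mul_sub_le_of_norm_le (hL : 0 ≤ L)
    (hE : ∀ x y, |E x - E y| ≤ L * (1 + ‖x‖ + ‖y‖) * ‖x - y‖) {α R : ℝ} (hα : 0 ≤ α) {x y : V}
    (hx : ‖x‖ ≤ R) (hy : ‖y‖ ≤ R) :
    |Real.exp (-α * E x) - Real.exp (-α * E y)| ≤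
      α * Real.exp (α * (sSup (E '' closedBall 0 R) - sInf (E '' closedBall 0 R))) *
        (L * (1 + 2 * R) * ‖x - y‖) * Real.exp (-α * E x) := by
  have hB := isBounded_image_closedBall_zero hE R
  have hmem {z : V} (hz : ‖z‖ ≤ R) : E z ∈ E '' closedBall 0 R :=
    Set.mem_image_of_mem E (mem_closedBall_zero_iff.mpr hz)
  refine (Real.abs_exp_neg_mul_sub_le_mul_exp_neg_mul hα (csInf_le hB.bddBelow (hmem hx))
    (le_csSup hB.bddAbove (hmem hx)) (csInf_le hB.bddBelow (hmem hy))).trans ?_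
  gcongr
  exact abs_sub_le_of_norm_le hL hE hx hy

end LocallyLipschitz

lemma norm_le_sqrt_sum_norm_sq {ι V : Type*} [Fintype ι] [SeminormedAddCommGroup V] (Y : ι → V)
    (j : ι) : ‖Y j‖ ≤ √(∑ k, ‖Y k‖ ^ 2) :=
  Real.le_sqrt_of_sq_le <| single_le_sum (f := fun k => ‖Y k‖ ^ 2) (fun _ _ => sq_nonneg _)
    (mem_univ j)

theorem stmt3_general {d N : ℕ} (α : ℝ) (hα : 0 < α)
    (E : EuclideanSpace ℝ (Fin d) → ℝ) (LE : ℝ)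
    (hLip : ∀ x y : EuclideanSpace ℝ (Fin d),
      |E x - E y| ≤ LE * (1 + ‖x‖ + ‖y‖) * ‖x - y‖)
    (R : ℝ)
    (X Xh : Fin N → EuclideanSpace ℝ (Fin d))
    (hX : Real.sqrt (∑ j, ‖X j‖ ^ 2) ≤ R)
    (hXh : Real.sqrt (∑ j, ‖Xh j‖ ^ 2) ≤ R) :
    ∀ i : Fin N,
      let Xα : (Fin N → EuclideanSpace ℝ (Fin d)) → EuclideanSpace ℝ (Fin d) :=
        fun Y => (∑ j, Real.exp (-α * E (Y j)))⁻¹ • ∑ j, Real.exp (-α * E (Y j)) • Y j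
      let F : (Fin N → EuclideanSpace ℝ (Fin d)) → Fin N → EuclideanSpace ℝ (Fin d) :=
        fun Y i => Y i - Xα Y
      let EbarR : ℝ := sSup (E '' closedBall 0 R)
      let EunderR : ℝ := sInf (E '' closedBall 0 R)
      ‖F X i - F Xh i‖ ≤
        2 * (2 + R * LE * (1 + 2 * R) * α * Real.exp (α * (EbarR - EunderR))) *
          (⨆ j : Fin N, ‖X j - Xh j‖) := by
  intro i Xα F EbarR EunderR
  set M := ⨆ j : Fin N, ‖X j - Xh j‖
  have hMj : ∀ j, ‖X j - Xh j‖ ≤ M := le_ciSup (Set.finite_range _).bddAbove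
  have hM : 0 ≤ M := (norm_nonneg _).trans (hMj i)
  -- `0 ≤ LE` can only be read off `hLip` at two distinct points.
  by_cases hXX : X = Xh
  · subst hXX
    have hM0 : M = 0 := by simp [M]
    simp [F, hM0]
  obtain ⟨j₀, hj₀⟩ := Function.ne_iff.mp hXX
  have hL : 0 ≤ LE := nonneg_of_abs_sub_le_mul_norm_sub hLip
    (norm_pos_iff.mpr (sub_ne_zero.mpr hj₀))
  have hK : 0 ≤ LE * (1 + 2 * R) := mul_nonneg hL (by linarith [(Real.sqrt_nonneg _).trans hX])
  have hXR j : ‖X j‖ ≤ R := (norm_le_sqrt_sum_norm_sq X j).trans hX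
  have hXhR j : ‖Xh j‖ ≤ R := (norm_le_sqrt_sum_norm_sq Xh j).trans hXh
  set ρ := α * Real.exp (α * (EbarR - EunderR)) * (LE * (1 + 2 * R) * M) with hρ
  have hweights : ∀ j ∈ univ,
      |Real.exp (-α * E (X j)) - Real.exp (-α * E (Xh j))| ≤ ρ * Real.exp (-α * E (X j)) :=
    fun j _ => (abs_exp_neg_mul_sub_le_of_norm_le hL hLip hα.le (hXR j) (hXhR j)).trans
      (by rw [hρ]; gcongr; exact hMj j)
  have hmean : ‖Xα X - Xα Xh‖ ≤ M + 2 * ρ * R :=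
    norm_centerMass_sub_centerMass_le (fun _ _ => (Real.exp_pos _).le)
      (fun _ _ => (Real.exp_pos _).le) (sum_pos (fun _ _ => Real.exp_pos _) ⟨i, mem_univ i⟩)
      (sum_pos (fun _ _ => Real.exp_pos _) ⟨i, mem_univ i⟩) hweights (fun j _ => hMj j)
      (fun j _ => hXhR j)
  calc ‖F X i - F Xh i‖ = ‖(X i - Xh i) - (Xα X - Xα Xh)‖ := by rw [sub_sub_sub_comm]
    _ ≤ M + (M + 2 * ρ * R) := norm_sub_le_of_le (hMj i) hmean
    _ ≤ _ := by linarith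

/-- **local Lipschitz estimate for the consensus drift.**
If `|E(x) − E(y)| ≤ L_E (1 + |x| + |y|)|x − y|`, then for all particle configurations
`X, X̂ ∈ (ℝ^d)^N` with Euclidean norms bounded by `R`, the drifts
`F^i(X) = X^i − X_α(X)` satisfy
`|F^i(X) − F^i(X̂)| ≤ 2(2 + R L_E (1+2R) α e^{α(Ē_R − 𝔼_R)}) max_j |X^j − X̂^j|`,
with `Ē_R = max_{|x|≤R} E x` and `𝔼_R = min_{|x|≤R} E x`. -/
theorem stmt3 {d N : ℕ} (hN : 0 < N) (α : ℝ) (hα : 0 < α)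
    (E : EuclideanSpace ℝ (Fin d) → ℝ) (LE : ℝ)
    (hLip : ∀ x y : EuclideanSpace ℝ (Fin d),
      |E x - E y| ≤ LE * (1 + ‖x‖ + ‖y‖) * ‖x - y‖)
    (R : ℝ) (hR : 0 < R)
    (X Xh : Fin N → EuclideanSpace ℝ (Fin d))
    (hX : Real.sqrt (∑ j, ‖X j‖ ^ 2) ≤ R)
    (hXh : Real.sqrt (∑ j, ‖Xh j‖ ^ 2) ≤ R) :
    ∀ i : Fin N,
      let Xα : (Fin N → EuclideanSpace ℝ (Fin d)) → EuclideanSpace ℝ (Fin d) :=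
        fun Y => (∑ j, Real.exp (-α * E (Y j)))⁻¹ • ∑ j, Real.exp (-α * E (Y j)) • Y j
      let F : (Fin N → EuclideanSpace ℝ (Fin d)) → Fin N → EuclideanSpace ℝ (Fin d) :=
        fun Y i => Y i - Xα Y
      let EbarR : ℝ := sSup (E '' closedBall 0 R)
      let EunderR : ℝ := sInf (E '' closedBall 0 R)
      ‖F X i - F Xh i‖ ≤
        2 * (2 + R * LE * (1 + 2 * R) * α * Real.exp (α * (EbarR - EunderR))) *
          (⨆ j : Fin N, ‖X j - Xh j‖) :=
  stmt3_general α hα E LE hLip R X Xh hX hXh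
end

section
/- Moment bound on the consensus point: Let E : D̄ → ℝ be continuous with E(x) − inf E ≥ c_l(|x|² − 1) and E(x) − inf E ≤ c_u(|x|² + 1) for all x ∈ D̄, where c_l, c_u > 0. Then for each p ≥ 1 and α > 0 there exists a constant c₁ > 0 depending only on c_u, c_l, p, α such that for every probability measure ρ on D̄ with finite p-th moment, |X_α(ρ)| ≤ (c₁ ∫_{D̄} |x|^p dρ(x))^{1/p}, where X_α(ρ) = (∫ x e^{-αE(x)} dρ(x)) / (∫ e^{-αE(x)} dρ(x)). -/
/-!
Writing `h = exp (-α (E - inf E))`, the consensus point is the mean of `x` under the probability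
measure `h ρ / ∫ h dρ`, so by Hölder `|X_α(ρ)|^p ≤ ∫ |x|^p h dρ / ∫ h dρ`. Let `M = ∫ |x|^p dρ`.
By Markov's inequality half of the mass of `ρ` lies in the ball of radius `R`, where
`R^p = 2 max(M, 1)`; there the quadratic upper bound keeps `h ≥ exp (-α T)` with
`T = c_u (R² + 1)`, so `∫ h dρ ≥ exp (-α T) / 2`. For `M ≤ 1` the radius is bounded and
`h ≤ exp (α c_l)` suffices for the numerator. For `M ≥ 1` split the numerator at the level
`E - inf E = T`: below it the quadratic lower bound gives `|x|^p ≲ R^p ≈ M`, above it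
`h ≤ exp (-α T) ≤ 2 ∫ h dρ`.
-/

open MeasureTheory Filter Real

section Holder

variable {α : Type*} [MeasurableSpace α] {μ : Measure α}

theorem memLp_ofReal_of_integrable_rpow {p : ℝ} (hp : 0 < p) {f : α → ℝ} (hf : 0 ≤ᵐ[μ] f)
    (hfm : AEStronglyMeasurable f μ) (hfp : Integrable (fun x => f x ^ p) μ) :
    MemLp f (ENNReal.ofReal p) μ := by
  rw [← integrable_norm_rpow_iff hfm (by simpa using hp) ENNReal.ofReal_ne_top,
    ENNReal.toReal_ofReal hp.le]
  refine hfp.congr ?_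
  filter_upwards [hf] with x hx
  rw [norm_of_nonneg hx]

theorem integral_mul_le_integral_rpow_mul {p : ℝ} (hp : 1 ≤ p) {f w : α → ℝ}
    (hf : 0 ≤ᵐ[μ] f) (hw : 0 ≤ᵐ[μ] w) (hfm : AEStronglyMeasurable f μ) (hwi : Integrable w μ)
    (hfwi : Integrable (fun x => f x ^ p * w x) μ) :
    ∫ x, f x * w x ∂μ ≤ (∫ x, f x ^ p * w x ∂μ) ^ (1 / p) * (∫ x, w x ∂μ) ^ (1 - 1 / p) := by
  rcases hp.eq_or_lt with rfl | hp1
  · simp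
  set q := p.conjExponent
  have hpq : p.HolderConjugate q := .conjExponent hp1
  have hsum : 1 / p + 1 / q = 1 := by simpa using hpq.one_div_add_one_div
  have h1q : 1 - 1 / p = 1 / q := by linarith
  set F := fun x => f x * w x ^ (1 / p)
  set G := fun x => w x ^ (1 / q)
  have hFp : ∀ᵐ x ∂μ, F x ^ p = f x ^ p * w x := by
    filter_upwards [hf, hw] with x hfx hwx
    rw [mul_rpow hfx (rpow_nonneg hwx _), ← rpow_mul hwx, one_div_mul_cancel hpq.ne_zero,
      rpow_one]
  have hGq : ∀ᵐ x ∂μ, G x ^ q = w x := by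
    filter_upwards [hw] with x hwx
    rw [← rpow_mul hwx, one_div_mul_cancel hpq.symm.ne_zero, rpow_one]
  have hFG : ∀ᵐ x ∂μ, F x * G x = f x * w x := by
    filter_upwards [hw] with x hwx
    rw [mul_assoc, ← rpow_add' hwx (by rw [hsum]; norm_num), hsum, rpow_one]
  have hF0 : 0 ≤ᵐ[μ] F := by
    filter_upwards [hf, hw] with x hfx hwx using mul_nonneg hfx (rpow_nonneg hwx _)
  have hG0 : 0 ≤ᵐ[μ] G := by
    filter_upwards [hw] with x hwx using rpow_nonneg hwx _
  have hwm' := hwi.aemeasurable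
  have hF : MemLp F (ENNReal.ofReal p) μ :=
    memLp_ofReal_of_integrable_rpow hpq.pos hF0
      (hfm.mul (hwm'.pow_const _).aestronglyMeasurable) (hfwi.congr (hFp.mono fun _ h => h.symm))
  have hG : MemLp G (ENNReal.ofReal q) μ :=
    memLp_ofReal_of_integrable_rpow hpq.symm.pos hG0 (hwm'.pow_const _).aestronglyMeasurable
      (hwi.congr (hGq.mono fun _ h => h.symm))
  have key := integral_mul_le_Lp_mul_Lq_of_nonneg hpq hF0 hG0 hF hG
  rwa [integral_congr_ae hFG, integral_congr_ae hFp, integral_congr_ae hGq, ← h1q] at key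

end Holder

section WeightedMean

variable {V : Type*} [NormedAddCommGroup V] [NormedSpace ℝ V] [MeasurableSpace V]

noncomputable def weightedMean (ρ : Measure V) (w : V → ℝ) : V :=
  (∫ x, w x ∂ρ)⁻¹ • ∫ x, w x • x ∂ρ

theorem weightedMean_const_mul (ρ : Measure V) (w : V → ℝ) {c : ℝ} (hc : c ≠ 0) :
    weightedMean ρ (fun x => c * w x) = weightedMean ρ w := by
  simp_rw [weightedMean, integral_const_mul, mul_smul]
  rw [integral_smul, smul_smul, mul_inv, mul_right_comm, inv_mul_cancel₀ hc, one_mul]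

theorem norm_weightedMean_le [OpensMeasurableSpace V] {ρ : Measure V} {w : V → ℝ} {p : ℝ}
    (hp : 1 ≤ p) (hw : 0 ≤ᵐ[ρ] w) (hwi : Integrable w ρ)
    (hwpos : 0 < ∫ x, w x ∂ρ) (hpwi : Integrable (fun x => ‖x‖ ^ p * w x) ρ) :
    ‖weightedMean ρ w‖ ≤ ((∫ x, ‖x‖ ^ p * w x ∂ρ) / ∫ x, w x ∂ρ) ^ (1 / p) := by
  set W := ∫ x, w x ∂ρ
  have hnorm : ‖∫ x, w x • x ∂ρ‖ ≤ ∫ x, ‖x‖ * w x ∂ρ := by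
    refine (norm_integral_le_integral_norm _).trans_eq (integral_congr_ae ?_)
    filter_upwards [hw] with x hx
    rw [norm_smul, norm_of_nonneg hx, mul_comm]
  have hholder := integral_mul_le_integral_rpow_mul hp (ae_of_all _ fun x => norm_nonneg x) hw
    continuous_norm.aestronglyMeasurable hwi hpwi
  calc ‖weightedMean ρ w‖ = W⁻¹ * ‖∫ x, w x • x ∂ρ‖ := by
        rw [weightedMean, norm_smul, norm_inv, norm_of_nonneg hwpos.le]
    _ ≤ W⁻¹ * ((∫ x, ‖x‖ ^ p * w x ∂ρ) ^ (1 / p) * W ^ (1 - 1 / p)) := by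
        gcongr
        exact hnorm.trans hholder
    _ = _ := by
        rw [div_rpow (integral_nonneg_of_ae ?_) hwpos.le, rpow_sub hwpos, rpow_one]
        · field_simp
        · filter_upwards [hw] with x hx using mul_nonneg (by positivity) hx

end WeightedMean

theorem half_le_measureReal_lt {Ω : Type*} [MeasurableSpace Ω] {μ : Measure Ω}
    [IsProbabilityMeasure μ] {f : Ω → ℝ} (hf : 0 ≤ᵐ[μ] f) (hfi : Integrable f μ) {t : ℝ}
    (ht : 0 < t) (hft : 2 * ∫ x, f x ∂μ ≤ t) : 1 / 2 ≤ μ.real {x | f x < t} := by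
  have hmarkov := mul_meas_ge_le_integral_of_nonneg hf hfi t
  have hcompl : {x | f x < t} = {x | t ≤ f x}ᶜ := by ext; simp
  have hnull : NullMeasurableSet {x | t ≤ f x} μ :=
    hfi.aemeasurable.nullMeasurable measurableSet_Ici
  rw [hcompl, measureReal_compl₀ hnull, probReal_univ]
  nlinarith

theorem exp_neg_mul_le_exp_mul {α cl r g : ℝ} (hα : 0 ≤ α) (hcl : 0 ≤ cl)
    (hg : cl * (r ^ 2 - 1) ≤ g) : exp (-α * g) ≤ exp (α * cl) :=
  exp_le_exp.2 <| by nlinarith [mul_nonneg hcl (sq_nonneg r)]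

/-- Split according to whether `g ≤ T`: below the level, the quadratic lower bound confines `r`;
above it, the Gibbs weight is at most `exp (-α * T)`. -/
theorem rpow_mul_exp_neg_mul_le {α cl p r g T : ℝ} (hα : 0 ≤ α) (hcl : 0 < cl) (hp : 0 ≤ p)
    (hr : 0 ≤ r) (hT : 0 ≤ T) (hg : cl * (r ^ 2 - 1) ≤ g) :
    r ^ p * exp (-α * g) ≤ (T / cl + 1) ^ (p / 2) * exp (-α * g) + exp (-α * T) * r ^ p := by
  have hrp : 0 ≤ r ^ p := rpow_nonneg hr p
  rcases le_or_gt g T with hgT | hgT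
  · have hr2 : r ^ 2 ≤ T / cl + 1 := by
      rw [div_add_one hcl.ne', le_div_iff₀ hcl]; nlinarith
    have hrp_le : r ^ p ≤ (T / cl + 1) ^ (p / 2) := by
      calc r ^ p = (r ^ 2) ^ (p / 2) := by
            rw [← rpow_natCast, ← rpow_mul hr]; congr 1; push_cast; ring
        _ ≤ (T / cl + 1) ^ (p / 2) := by gcongr
    nlinarith [mul_le_mul_of_nonneg_right hrp_le (exp_pos (-α * g)).le, exp_pos (-α * T)]
  · have hexp : exp (-α * g) ≤ exp (-α * T) := exp_le_exp.2 (by nlinarith)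
    have : 0 ≤ (T / cl + 1) ^ (p / 2) * exp (-α * g) := by positivity
    nlinarith [mul_le_mul_of_nonneg_left hexp hrp]

section Gibbs

variable {V : Type*} [NormedAddCommGroup V] [MeasurableSpace V]
  {ρ : Measure V} {g : V → ℝ} {cl cu α p : ℝ}

theorem integrable_exp_neg_mul [IsFiniteMeasure ρ] (hα : 0 ≤ α) (hcl : 0 ≤ cl)
    (hgm : AEMeasurable g ρ) (hlow : ∀ᵐ x ∂ρ, cl * (‖x‖ ^ 2 - 1) ≤ g x) :
    Integrable (fun x => exp (-α * g x)) ρ := by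
  refine (integrable_const (exp (α * cl))).mono' (by fun_prop) ?_
  filter_upwards [hlow] with x hx
  rw [norm_of_nonneg (exp_pos _).le]
  exact exp_neg_mul_le_exp_mul hα hcl hx

theorem integrable_rpow_mul_exp_neg_mul (hα : 0 ≤ α) (hcl : 0 ≤ cl)
    (hgm : AEMeasurable g ρ) (hlow : ∀ᵐ x ∂ρ, cl * (‖x‖ ^ 2 - 1) ≤ g x)
    (hint : Integrable (fun x => ‖x‖ ^ p) ρ) :
    Integrable (fun x => ‖x‖ ^ p * exp (-α * g x)) ρ := by
  refine (hint.mul_const (exp (α * cl))).mono'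
    (hint.aestronglyMeasurable.mul (by fun_prop)) ?_
  filter_upwards [hlow] with x hx
  rw [norm_mul, norm_of_nonneg (exp_pos _).le, norm_of_nonneg (by positivity)]
  exact mul_le_mul_of_nonneg_left (exp_neg_mul_le_exp_mul hα hcl hx) (by positivity)

theorem integral_rpow_mul_exp_neg_mul_le (hα : 0 ≤ α) (hcl : 0 ≤ cl)
    (hgm : AEMeasurable g ρ) (hlow : ∀ᵐ x ∂ρ, cl * (‖x‖ ^ 2 - 1) ≤ g x)
    (hint : Integrable (fun x => ‖x‖ ^ p) ρ) :
    ∫ x, ‖x‖ ^ p * exp (-α * g x) ∂ρ ≤ exp (α * cl) * ∫ x, ‖x‖ ^ p ∂ρ := by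
  rw [← integral_const_mul]
  refine integral_mono_ae (integrable_rpow_mul_exp_neg_mul hα hcl hgm hlow hint)
    (hint.const_mul _) ?_
  filter_upwards [hlow] with x hx
  rw [mul_comm (exp (α * cl))]
  exact mul_le_mul_of_nonneg_left (exp_neg_mul_le_exp_mul hα hcl hx) (by positivity)

/-- By Markov's inequality at least half of the mass of `ρ` lies in the ball of radius `R`,
where the upper bound on `g` keeps the Gibbs weight above `exp (-α * cu * (R ^ 2 + 1))`. -/
theorem exp_neg_mul_le_two_mul_integral_exp_neg_mul [IsProbabilityMeasure ρ] (hα : 0 ≤ α)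
    (hcu : 0 ≤ cu) (hp : 0 < p) (hup : ∀ᵐ x ∂ρ, g x ≤ cu * (‖x‖ ^ 2 + 1))
    (hgi : Integrable (fun x => exp (-α * g x)) ρ) (hint : Integrable (fun x => ‖x‖ ^ p) ρ)
    {R : ℝ} (hR : 0 < R) (hM : 2 * ∫ x, ‖x‖ ^ p ∂ρ ≤ R ^ p) :
    exp (-α * (cu * (R ^ 2 + 1))) ≤ 2 * ∫ x, exp (-α * g x) ∂ρ := by
  set c := exp (-α * (cu * (R ^ 2 + 1)))
  have hball := half_le_measureReal_lt (ae_of_all _ fun x => by positivity) hint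
    (rpow_pos_of_pos hR p) hM
  have hsub : {x | ‖x‖ ^ p < R ^ p} ≤ᵐ[ρ] {x | c ≤ exp (-α * g x)} := by
    filter_upwards [hup] with x hx hlt
    have hxR : ‖x‖ < R := (rpow_lt_rpow_iff (norm_nonneg x) hR.le hp).1 hlt
    have hgR : g x ≤ cu * (R ^ 2 + 1) := hx.trans (by gcongr)
    exact exp_le_exp.2 (by nlinarith [mul_le_mul_of_nonneg_left hgR hα])
  have hmass : ρ.real {x | ‖x‖ ^ p < R ^ p} ≤ ρ.real {x | c ≤ exp (-α * g x)} :=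
    ENNReal.toReal_mono (measure_ne_top _ _) (measure_mono_ae hsub)
  have hmarkov := mul_meas_ge_le_integral_of_nonneg (ae_of_all _ fun x => (exp_pos _).le) hgi c
  nlinarith [exp_pos (-α * (cu * (R ^ 2 + 1)))]

variable [IsProbabilityMeasure ρ]

theorem integral_rpow_mul_exp_neg_mul_div_le_of_le_one (hα : 0 ≤ α) (hcl : 0 ≤ cl)
    (hcu : 0 ≤ cu) (hp : 1 ≤ p) (hgm : AEMeasurable g ρ)
    (hlow : ∀ᵐ x ∂ρ, cl * (‖x‖ ^ 2 - 1) ≤ g x) (hup : ∀ᵐ x ∂ρ, g x ≤ cu * (‖x‖ ^ 2 + 1))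
    (hint : Integrable (fun x => ‖x‖ ^ p) ρ) (hM : ∫ x, ‖x‖ ^ p ∂ρ ≤ 1) :
    (∫ x, ‖x‖ ^ p * exp (-α * g x) ∂ρ) / ∫ x, exp (-α * g x) ∂ρ ≤
      2 * exp (α * (cl + 5 * cu)) * ∫ x, ‖x‖ ^ p ∂ρ := by
  have hp0 : 0 < p := one_pos.trans_le hp
  have hgi := integrable_exp_neg_mul hα hcl hgm hlow
  have hM0 : 0 ≤ ∫ x, ‖x‖ ^ p ∂ρ := integral_nonneg fun x => by positivity
  set R : ℝ := 2 ^ p⁻¹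
  have hRp : R ^ p = 2 := rpow_inv_rpow zero_le_two hp0.ne'
  have hR0 : 0 < R := by positivity
  have hR2 : R ≤ 2 := by
    simpa using rpow_le_rpow_of_exponent_le one_le_two (inv_le_one_of_one_le₀ hp)
  have hden := exp_neg_mul_le_two_mul_integral_exp_neg_mul hα hcu hp0 hup hgi hint hR0
    (by linarith)
  have hden' : exp (-α * (5 * cu)) ≤ 2 * ∫ x, exp (-α * g x) ∂ρ := by
    have hcuR : cu * (R ^ 2 + 1) ≤ 5 * cu := by nlinarith [mul_le_mul_of_nonneg_left hR2 hR0.le]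
    exact (exp_le_exp.2 (by nlinarith [mul_le_mul_of_nonneg_left hcuR hα])).trans hden
  rw [div_le_iff₀ (integral_exp_pos hgi)]
  calc ∫ x, ‖x‖ ^ p * exp (-α * g x) ∂ρ
      ≤ exp (α * cl) * ∫ x, ‖x‖ ^ p ∂ρ := integral_rpow_mul_exp_neg_mul_le hα hcl hgm hlow hint
    _ = exp (α * (cl + 5 * cu)) * (∫ x, ‖x‖ ^ p ∂ρ) * exp (-α * (5 * cu)) := by
        rw [mul_right_comm, ← exp_add]; ring_nf
    _ ≤ exp (α * (cl + 5 * cu)) * (∫ x, ‖x‖ ^ p ∂ρ) * (2 * ∫ x, exp (-α * g x) ∂ρ) := by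
        gcongr
    _ = _ := by ring

theorem integral_rpow_mul_exp_neg_mul_div_le_of_one_le (hα : 0 ≤ α) (hcl : 0 < cl)
    (hcu : 0 ≤ cu) (hp : 1 ≤ p) (hgm : AEMeasurable g ρ)
    (hlow : ∀ᵐ x ∂ρ, cl * (‖x‖ ^ 2 - 1) ≤ g x) (hup : ∀ᵐ x ∂ρ, g x ≤ cu * (‖x‖ ^ 2 + 1))
    (hint : Integrable (fun x => ‖x‖ ^ p) ρ) (hM : 1 ≤ ∫ x, ‖x‖ ^ p ∂ρ) :
    (∫ x, ‖x‖ ^ p * exp (-α * g x) ∂ρ) / ∫ x, exp (-α * g x) ∂ρ ≤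
      (2 * (2 * cu / cl + 1) ^ (p / 2) + 2) * ∫ x, ‖x‖ ^ p ∂ρ := by
  have hp0 : 0 < p := one_pos.trans_le hp
  have hgi := integrable_exp_neg_mul hα hcl.le hgm hlow
  set M := ∫ x, ‖x‖ ^ p ∂ρ
  set Z := ∫ x, exp (-α * g x) ∂ρ
  set R : ℝ := (2 * M) ^ p⁻¹
  have hRp : R ^ p = 2 * M := rpow_inv_rpow (by linarith) hp0.ne'
  have hR1 : 1 ≤ R := one_le_rpow (by linarith) (by positivity)
  set T := cu * (R ^ 2 + 1)
  have hden : exp (-α * T) ≤ 2 * Z :=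
    exp_neg_mul_le_two_mul_integral_exp_neg_mul hα hcu hp0 hup hgi hint (by linarith) hRp.ge
  have hnum :
      ∫ x, ‖x‖ ^ p * exp (-α * g x) ∂ρ ≤ (T / cl + 1) ^ (p / 2) * Z + exp (-α * T) * M := by
    rw [← integral_const_mul, ← integral_const_mul,
      ← integral_add (hgi.const_mul _) (hint.const_mul _)]
    refine integral_mono_ae (integrable_rpow_mul_exp_neg_mul hα hcl.le hgm hlow hint)
      ((hgi.const_mul _).add (hint.const_mul _)) ?_
    filter_upwards [hlow] with x hx
    exact rpow_mul_exp_neg_mul_le hα hcl hp0.le (norm_nonneg x) (by positivity) hx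
  have hlevel : (T / cl + 1) ^ (p / 2) ≤ (2 * cu / cl + 1) ^ (p / 2) * (2 * M) := by
    have hk : 0 ≤ cu / cl := by positivity
    have hT : T / cl + 1 ≤ (2 * cu / cl + 1) * R ^ 2 := by
      have : T / cl = cu / cl * (R ^ 2 + 1) := by ring
      rw [this, mul_div_assoc]
      nlinarith [one_le_pow₀ (n := 2) hR1]
    calc (T / cl + 1) ^ (p / 2) ≤ ((2 * cu / cl + 1) * R ^ 2) ^ (p / 2) := by gcongr
      _ = (2 * cu / cl + 1) ^ (p / 2) * R ^ p := by
          rw [mul_rpow (by positivity) (by positivity), ← rpow_natCast,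
            ← rpow_mul (by positivity)]
          congr 2
          push_cast
          ring
      _ = _ := by rw [hRp]
  have hZ : 0 < Z := integral_exp_pos hgi
  rw [div_le_iff₀ hZ]
  have : exp (-α * T) * M ≤ 2 * Z * M := by gcongr
  nlinarith [mul_le_mul_of_nonneg_right hlevel hZ.le]

theorem integral_rpow_mul_exp_neg_mul_div_le (hα : 0 ≤ α) (hcl : 0 < cl)
    (hcu : 0 ≤ cu) (hp : 1 ≤ p) (hgm : AEMeasurable g ρ)
    (hlow : ∀ᵐ x ∂ρ, cl * (‖x‖ ^ 2 - 1) ≤ g x) (hup : ∀ᵐ x ∂ρ, g x ≤ cu * (‖x‖ ^ 2 + 1))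
    (hint : Integrable (fun x => ‖x‖ ^ p) ρ) :
    (∫ x, ‖x‖ ^ p * exp (-α * g x) ∂ρ) / ∫ x, exp (-α * g x) ∂ρ ≤
      (2 * exp (α * (cl + 5 * cu)) + 2 * (2 * cu / cl + 1) ^ (p / 2) + 2) *
        ∫ x, ‖x‖ ^ p ∂ρ := by
  have hM0 : 0 ≤ ∫ x, ‖x‖ ^ p ∂ρ := integral_nonneg fun x => by positivity
  rcases le_total (∫ x, ‖x‖ ^ p ∂ρ) 1 with hM | hM
  · refine (integral_rpow_mul_exp_neg_mul_div_le_of_le_one hα hcl.le hcu hp hgm hlow hup hint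
      hM).trans (by gcongr; linarith [show 0 ≤ (2 * cu / cl + 1) ^ (p / 2) by positivity])
  · refine (integral_rpow_mul_exp_neg_mul_div_le_of_one_le hα hcl hcu hp hgm hlow hup hint
      hM).trans (by gcongr; linarith [exp_pos (α * (cl + 5 * cu))])

end Gibbs

/-- **moment bound on the consensus point.**
If `E` is continuous on the closed set `D̄` with
`c_l(|x|²−1) ≤ E(x) − inf E ≤ c_u(|x|²+1)` on `D̄`, then for each `p ≥ 1` and `α > 0`
there is `c₁ > 0` depending only on `c_u, c_l, p, α` such that every probability
measure `ρ` on `D̄` with finite `p`-th moment satisfies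
`|X_α(ρ)| ≤ (c₁ ∫ |x|^p dρ)^{1/p}`. -/
theorem stmt4 (cl cu p α : ℝ) (hcl : 0 < cl) (hcu : 0 < cu) (hp : 1 ≤ p) (hα : 0 < α) :
    ∃ c₁ > 0, ∀ (d : ℕ) (D : Set (EuclideanSpace ℝ (Fin d))) (_ : IsClosed D)
      (E : EuclideanSpace ℝ (Fin d) → ℝ) (_ : ContinuousOn E D)
      (Einf : ℝ) (_ : IsGLB (E '' D) Einf)
      (_ : ∀ x ∈ D, cl * (‖x‖ ^ 2 - 1) ≤ E x - Einf)
      (_ : ∀ x ∈ D, E x - Einf ≤ cu * (‖x‖ ^ 2 + 1))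
      (ρ : Measure (EuclideanSpace ℝ (Fin d))) (_ : IsProbabilityMeasure ρ)
      (_ : ρ Dᶜ = 0)
      (_ : Integrable (fun x => ‖x‖ ^ p) ρ),
      ‖(∫ x, Real.exp (-α * E x) ∂ρ)⁻¹ • ∫ x, Real.exp (-α * E x) • x ∂ρ‖ ≤
        (c₁ * ∫ x, ‖x‖ ^ p ∂ρ) ^ (1 / p) := by
  refine ⟨2 * exp (α * (cl + 5 * cu)) + 2 * (2 * cu / cl + 1) ^ (p / 2) + 2, by positivity, ?_⟩
  intro d D hD E hE Einf _ hlow hup ρ _ hρD hint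
  have hae : ∀ᵐ x ∂ρ, x ∈ D := ae_iff.2 hρD
  set g := fun x => E x - Einf
  have hgm : AEMeasurable g ρ := by
    have hEm := hE.aemeasurable (μ := ρ) hD.measurableSet
    rw [Measure.restrict_eq_self_of_ae_mem hae] at hEm
    exact hEm.sub_const _
  have hlow' : ∀ᵐ x ∂ρ, cl * (‖x‖ ^ 2 - 1) ≤ g x := hae.mono hlow
  have hup' : ∀ᵐ x ∂ρ, g x ≤ cu * (‖x‖ ^ 2 + 1) := hae.mono hup
  have hgi := integrable_exp_neg_mul hα.le hcl.le hgm hlow'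
  have hmean :
      weightedMean ρ (fun x => exp (-α * E x)) = weightedMean ρ (fun x => exp (-α * g x)) := by
    rw [← weightedMean_const_mul ρ (fun x => exp (-α * g x)) (exp_pos (-α * Einf)).ne']
    congr 1
    funext x
    rw [← exp_add]
    congr 1
    simp only [g]
    ring
  change ‖weightedMean ρ (fun x => exp (-α * E x))‖ ≤ _
  rw [hmean]
  refine (norm_weightedMean_le hp (ae_of_all _ fun x => (exp_pos _).le) hgi
    (integral_exp_pos hgi) (integrable_rpow_mul_exp_neg_mul hα.le hcl.le hgm hlow' hint)).trans ?_
  gcongr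
  exact integral_rpow_mul_exp_neg_mul_div_le hα.le hcl hcu.le hp hgm hlow' hup' hint
end

section
/- Quantitative Laplace principle near the minimizer: Let E : D̄ → ℝ be continuous with unique global minimizer x* and minimum value 𝔼, satisfying the inverse continuity condition η|x − x*| ≤ (E(x) − 𝔼)^ν on B_{R₀}(x*) ∩ D̄ and E(x) − 𝔼 > E_∞ outside B_{R₀}(x*), for constants η, ν, E_∞, R₀ > 0. Let ρ be a probability measure on D̄, let 0 < q ≤ E_∞/2, and let r = max{ s ∈ (0, R₀] : sup_{x ∈ B_s(x*) ∩ D̄} (E(x) − 𝔼) ≤ q }. Then |x* − X_α(ρ)| ≤ (2q)^ν / η + ( exp(−αq) / ρ(B_r(x*) ∩ D̄) ) · ∫_{D̄} |x − x*| dρ(x). -/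
open MeasureTheory Metric

/-- **quantitative Laplace principle near the minimizer.**
Under the inverse continuity conditions around the unique global minimizer `x*`, for
`0 < q ≤ E_∞/2` and `r` the largest `s ∈ (0, R₀]` with
`sup_{B_s(x*) ∩ D̄}(E − 𝔼) ≤ q`, the consensus point satisfies
`|x* − X_α(ρ)| ≤ (2q)^ν/η + (e^{−αq}/ρ(B_r(x*) ∩ D̄)) ∫ |x − x*| dρ`. -/
theorem stmt8 {d : ℕ} (D : Set (EuclideanSpace ℝ (Fin d))) (hDcl : IsClosed D)
    (E : EuclideanSpace ℝ (Fin d) → ℝ) (hE : Continuous E)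
    (xstar : EuclideanSpace ℝ (Fin d)) (hxD : xstar ∈ D)
    (m : ℝ) (hmin : ∀ x ∈ D, m ≤ E x) (hEx : E xstar = m)
    (huniq : ∀ x ∈ D, E x = m → x = xstar)
    (η ν Einfty R₀ : ℝ) (hη : 0 < η) (hν : 0 < ν) (hEinfty : 0 < Einfty) (hR₀ : 0 < R₀)
    (hinv : ∀ x ∈ closedBall xstar R₀ ∩ D, η * ‖x - xstar‖ ≤ (E x - m) ^ ν)
    (hout : ∀ x ∈ D, x ∉ closedBall xstar R₀ → Einfty < E x - m)
    (α : ℝ) (hα : 0 < α)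
    (q : ℝ) (hq : 0 < q) (hqE : q ≤ Einfty / 2)
    (r : ℝ)
    (hr : IsGreatest {s | s ∈ Set.Ioc (0 : ℝ) R₀ ∧
      ∀ x ∈ closedBall xstar s ∩ D, E x - m ≤ q} r)
    (ρ : Measure (EuclideanSpace ℝ (Fin d))) [IsProbabilityMeasure ρ]
    (hρD : ρ Dᶜ = 0) (hmass : 0 < ρ (closedBall xstar r ∩ D))
    (hI : Integrable (fun x => ‖x - xstar‖) ρ) :
    ‖xstar - (∫ x, Real.exp (-α * E x) ∂ρ)⁻¹ • ∫ x, Real.exp (-α * E x) • x ∂ρ‖ ≤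
      (2 * q) ^ ν / η +
        Real.exp (-α * q) / (ρ (closedBall xstar r ∩ D)).toReal *
          ∫ x, ‖x - xstar‖ ∂ρ := by
  classical
  set w : EuclideanSpace ℝ (Fin d) → ℝ := fun x => Real.exp (-α * E x) with hw
  have hwc : Continuous w := Real.continuous_exp.comp (continuous_const.mul hE)
  have hwpos : ∀ x, 0 < w x := fun x => Real.exp_pos _
  have hDae : ∀ᵐ x ∂ρ, x ∈ D := by
    rw [ae_iff]
    exact hρD
  have hwb : ∀ x ∈ D, w x ≤ Real.exp (-α * m) := by
    intro x hx
    exact Real.exp_le_exp.mpr (by nlinarith [hmin x hx])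
  have hwI : Integrable w ρ := by
    refine (integrable_const (Real.exp (-α * m))).mono' hwc.aestronglyMeasurable ?_
    filter_upwards [hDae] with x hx
    rw [Real.norm_eq_abs, abs_of_pos (hwpos x)]
    exact hwb x hx
  set Z := ∫ x, w x ∂ρ with hZ
  set B := closedBall xstar r ∩ D with hB
  have hBmeas : MeasurableSet B := measurableSet_closedBall.inter hDcl.measurableSet
  have hrq : ∀ x ∈ B, E x - m ≤ q := hr.1.2
  have hρB : 0 < (ρ B).toReal := ENNReal.toReal_pos hmass.ne' (measure_ne_top ρ B)
  have hZlow : Real.exp (-α * (m + q)) * (ρ B).toReal ≤ Z := by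
    have h1 : Real.exp (-α * (m + q)) * (ρ B).toReal ≤ ∫ x in B, w x ∂ρ := by
      refine setIntegral_ge_of_const_le_real hBmeas (measure_ne_top ρ B) ?_ hwI.integrableOn
      intro x hx
      exact Real.exp_le_exp.mpr (by nlinarith [hrq x hx])
    exact h1.trans (setIntegral_le_integral hwI
      (Filter.Eventually.of_forall fun x => (hwpos x).le))
  have hZpos : 0 < Z := lt_of_lt_of_le (by positivity) hZlow
  -- integrability of the vector integrands
  have hgI : Integrable (fun x => w x • (xstar - x)) ρ := by
    refine (hI.const_mul (Real.exp (-α * m))).mono'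
      (hwc.aestronglyMeasurable.smul
        (continuous_const.sub continuous_id).aestronglyMeasurable) ?_
    filter_upwards [hDae] with x hx
    rw [norm_smul, Real.norm_eq_abs, abs_of_pos (hwpos x), norm_sub_rev]
    exact mul_le_mul_of_nonneg_right (hwb x hx) (norm_nonneg _)
  have hwxI : Integrable (fun x => w x • x) ρ := by
    have heq : (fun x => w x • x) = fun x => w x • xstar - w x • (xstar - x) := by
      funext x; rw [smul_sub]; abel
    rw [heq]
    exact (hwI.smul_const xstar).sub hgI
  -- the key identity
  have hkey : xstar - Z⁻¹ • ∫ x, w x • x ∂ρ = Z⁻¹ • ∫ x, w x • (xstar - x) ∂ρ := by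
    have h1 : ∫ x, w x • (xstar - x) ∂ρ
        = (∫ x, w x • xstar ∂ρ) - ∫ x, w x • x ∂ρ := by
      rw [← integral_sub (hwI.smul_const xstar) hwxI]
      congr 1; funext x; rw [smul_sub]
    rw [h1, integral_smul_const, smul_sub, smul_smul, inv_mul_cancel₀ hZpos.ne', one_smul]
  have hJI : Integrable (fun x => w x * ‖x - xstar‖) ρ := by
    refine hgI.norm.congr (Filter.Eventually.of_forall fun x => ?_)
    show ‖w x • (xstar - x)‖ = w x * ‖x - xstar‖
    rw [norm_smul, Real.norm_eq_abs, abs_of_pos (hwpos x), norm_sub_rev]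
  set J := ∫ x, w x * ‖x - xstar‖ ∂ρ with hJ
  have hnorm : ‖xstar - Z⁻¹ • ∫ x, w x • x ∂ρ‖ ≤ Z⁻¹ * J := by
    rw [hkey, norm_smul, Real.norm_eq_abs, abs_of_pos (inv_pos.2 hZpos)]
    refine mul_le_mul_of_nonneg_left ?_ (inv_pos.2 hZpos).le
    calc ‖∫ x, w x • (xstar - x) ∂ρ‖ ≤ ∫ x, ‖w x • (xstar - x)‖ ∂ρ :=
          norm_integral_le_integral_norm _
      _ = J := integral_congr_ae (Filter.Eventually.of_forall fun x => by
          show ‖w x • (xstar - x)‖ = w x * ‖x - xstar‖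
          rw [norm_smul, Real.norm_eq_abs, abs_of_pos (hwpos x), norm_sub_rev])
  -- split the integral
  set K : Set (EuclideanSpace ℝ (Fin d)) := {x | E x - m ≤ 2 * q} with hK
  have hKmeas : MeasurableSet K :=
    measurableSet_le ((hE.measurable).sub measurable_const) measurable_const
  have hsplit : J = (∫ x in K, w x * ‖x - xstar‖ ∂ρ)
      + ∫ x in Kᶜ, w x * ‖x - xstar‖ ∂ρ := (integral_add_compl hKmeas hJI).symm
  have hKball : ∀ x ∈ D, x ∈ K → ‖x - xstar‖ ≤ (2 * q) ^ ν / η := by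
    intro x hxD' hxK
    have hxK' : E x - m ≤ 2 * q := hxK
    have hxR : x ∈ closedBall xstar R₀ := by
      by_contra hx
      have h3 := hout x hxD' hx
      linarith
    have h1 := hinv x ⟨hxR, hxD'⟩
    have h2 : (E x - m) ^ ν ≤ (2 * q) ^ ν :=
      Real.rpow_le_rpow (sub_nonneg.2 (hmin x hxD')) hxK' hν.le
    rw [le_div_iff₀ hη]
    nlinarith
  have hT1 : ∫ x in K, w x * ‖x - xstar‖ ∂ρ ≤ ((2 * q) ^ ν / η) * Z := by
    have step1 : ∫ x in K, w x * ‖x - xstar‖ ∂ρ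
        ≤ ∫ x in K, ((2 * q) ^ ν / η) * w x ∂ρ := by
      refine integral_mono_ae hJI.restrict ((hwI.const_mul _).restrict) ?_
      filter_upwards [ae_restrict_mem hKmeas, ae_restrict_of_ae hDae] with x hxK hxD'
      rw [mul_comm ((2 * q) ^ ν / η)]
      exact mul_le_mul_of_nonneg_left (hKball x hxD' hxK) (hwpos x).le
    refine step1.trans ?_
    rw [integral_const_mul]
    have hc : 0 ≤ (2 * q) ^ ν / η := by positivity
    exact mul_le_mul_of_nonneg_left
      (setIntegral_le_integral hwI (Filter.Eventually.of_forall fun x => (hwpos x).le)) hc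
  have hT2 : ∫ x in Kᶜ, w x * ‖x - xstar‖ ∂ρ
      ≤ Real.exp (-α * (m + 2 * q)) * ∫ x, ‖x - xstar‖ ∂ρ := by
    have step1 : ∫ x in Kᶜ, w x * ‖x - xstar‖ ∂ρ
        ≤ ∫ x in Kᶜ, Real.exp (-α * (m + 2 * q)) * ‖x - xstar‖ ∂ρ := by
      refine integral_mono_ae hJI.restrict ((hI.const_mul _).restrict) ?_
      filter_upwards [ae_restrict_mem hKmeas.compl] with x hx
      have hx' : 2 * q < E x - m := lt_of_not_ge hx
      exact mul_le_mul_of_nonneg_right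
        (Real.exp_le_exp.mpr (by nlinarith)) (norm_nonneg _)
    refine step1.trans ?_
    rw [integral_const_mul]
    refine mul_le_mul_of_nonneg_left ?_ (Real.exp_pos _).le
    exact setIntegral_le_integral hI (Filter.Eventually.of_forall fun x => norm_nonneg _)
  have hInn : 0 ≤ ∫ x, ‖x - xstar‖ ∂ρ := integral_nonneg fun x => norm_nonneg _
  have hfrac : Real.exp (-α * (m + 2 * q)) / Real.exp (-α * (m + q)) = Real.exp (-α * q) := by
    rw [← Real.exp_sub]; ring_nf
  have hZinv : Z⁻¹ ≤ (Real.exp (-α * (m + q)) * (ρ B).toReal)⁻¹ := by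
    exact inv_anti₀ (by positivity) hZlow
  have hfin : Z⁻¹ * J ≤ (2 * q) ^ ν / η
      + Real.exp (-α * q) / (ρ B).toReal * ∫ x, ‖x - xstar‖ ∂ρ := by
    rw [hsplit, mul_add]
    have h1 : Z⁻¹ * (∫ x in K, w x * ‖x - xstar‖ ∂ρ) ≤ (2 * q) ^ ν / η := by
      calc Z⁻¹ * (∫ x in K, w x * ‖x - xstar‖ ∂ρ)
          ≤ Z⁻¹ * (((2 * q) ^ ν / η) * Z) :=
            mul_le_mul_of_nonneg_left hT1 (inv_pos.2 hZpos).le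
        _ = (2 * q) ^ ν / η := by field_simp
    have h2 : Z⁻¹ * (∫ x in Kᶜ, w x * ‖x - xstar‖ ∂ρ)
        ≤ Real.exp (-α * q) / (ρ B).toReal * ∫ x, ‖x - xstar‖ ∂ρ := by
      have hT2' : 0 ≤ Real.exp (-α * (m + 2 * q)) * ∫ x, ‖x - xstar‖ ∂ρ := by positivity
      calc Z⁻¹ * (∫ x in Kᶜ, w x * ‖x - xstar‖ ∂ρ)
          ≤ Z⁻¹ * (Real.exp (-α * (m + 2 * q)) * ∫ x, ‖x - xstar‖ ∂ρ) :=
            mul_le_mul_of_nonneg_left hT2 (inv_pos.2 hZpos).le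
        _ ≤ (Real.exp (-α * (m + q)) * (ρ B).toReal)⁻¹
              * (Real.exp (-α * (m + 2 * q)) * ∫ x, ‖x - xstar‖ ∂ρ) :=
            mul_le_mul_of_nonneg_right hZinv hT2'
        _ = Real.exp (-α * (m + 2 * q)) / Real.exp (-α * (m + q)) / (ρ B).toReal
              * ∫ x, ‖x - xstar‖ ∂ρ := by
            field_simp
        _ = Real.exp (-α * q) / (ρ B).toReal * ∫ x, ‖x - xstar‖ ∂ρ := by rw [hfrac]
    linarith
  exact le_trans hnorm hfin
end

section
/- Pointwise drift-diffusion lower bound on the mollifier generator, region K₁ᶜ: Let c ∈ (1/2, 1), r > 0, x₀, v, y ∈ ℝ^d, and suppose |(y − x₀)_k| ≤ √c · r and |(y − v)_k| ≤ √c r + M for some M > 0. Then with φ_r as above, −λ (y − v)_k ∂_{x_k} φ_r(y) ≥ −(2λ(√c r + M)√c / ((1−c)² r)) φ_r(y) and (σ²/2)(y − v)_k² ∂²_{x_k} φ_r(y) ≥ −(σ²(√c r + M)²(2c+1) / ((1−c)⁴ r²)) φ_r(y). -/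
open Finset

/-- The product mollifier `φ_r(x) = ∏_k exp(1 − r²/(r² − (x−x₀)_k²))` on the open
`ℓ∞`-ball of radius `r` around `x₀`, extended by `0` outside. -/
noncomputable def moll {d : ℕ} (r : ℝ) (x₀ x : EuclideanSpace ℝ (Fin d)) : ℝ :=
  open Classical in
  if ∀ k, |(x - x₀) k| < r then
    ∏ k, Real.exp (1 - r ^ 2 / (r ^ 2 - ((x - x₀) k) ^ 2))
  else 0

/-!
Along the `k`-th coordinate line through a point `y` of the open box, `φ_r` is locally a constant
times the one-dimensional bump `g(s) = exp(1 - r²/(r² - s²))` evaluated at `s = (y - x₀)_k + t`.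
Hence `∂_k φ_r = φ_r h(s)` and `∂_k² φ_r = φ_r (h(s)² + h'(s))`, with `h = g'/g = -2r²s/(r² - s²)²`.
The hypothesis `|s| ≤ √c r` gives `r² - s² ≥ (1 - c) r²`, which bounds `|h|` and `-h'`; the term
`h²` is nonnegative and is dropped.
-/

noncomputable def bump (r s : ℝ) : ℝ := Real.exp (1 - r ^ 2 / (r ^ 2 - s ^ 2))

noncomputable def bumpLogDeriv (r s : ℝ) : ℝ := -2 * r ^ 2 * s / (r ^ 2 - s ^ 2) ^ 2

noncomputable def bumpLogDerivDeriv (r s : ℝ) : ℝ :=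
  -2 * r ^ 2 * (r ^ 2 + 3 * s ^ 2) / (r ^ 2 - s ^ 2) ^ 3

section Bump

variable {r s : ℝ}

lemma hasDerivAt_bump (h : r ^ 2 - s ^ 2 ≠ 0) :
    HasDerivAt (bump r) (bump r s * bumpLogDeriv r s) s := by
  have hden : HasDerivAt (fun u : ℝ => r ^ 2 - u ^ 2) (-(2 * s)) s := by
    simpa using (hasDerivAt_pow 2 s).const_sub (r ^ 2)
  refine (((hasDerivAt_const s (r ^ 2)).fun_div hden h).const_sub 1).exp.congr_deriv ?_
  rw [bump, bumpLogDeriv]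
  field_simp
  ring

lemma hasDerivAt_bumpLogDeriv (h : r ^ 2 - s ^ 2 ≠ 0) :
    HasDerivAt (bumpLogDeriv r) (bumpLogDerivDeriv r s) s := by
  have hden : HasDerivAt (fun u : ℝ => r ^ 2 - u ^ 2) (-(2 * s)) s := by
    simpa using (hasDerivAt_pow 2 s).const_sub (r ^ 2)
  refine (((hasDerivAt_id' s).const_mul (-2 * r ^ 2)).fun_div (hden.fun_pow 2)
    (pow_ne_zero 2 h)).congr_deriv ?_
  rw [bumpLogDerivDeriv]
  field_simp
  ring

variable {a c : ℝ}

lemma one_sub_mul_sq_le_sq_sub_sq (hc : 0 ≤ c) (ha : |a| ≤ √c * r) :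
    (1 - c) * r ^ 2 ≤ r ^ 2 - a ^ 2 := by
  have : a ^ 2 ≤ (√c * r) ^ 2 := sq_le_sq' (neg_le_of_abs_le ha) (le_of_abs_le ha)
  rw [mul_pow, Real.sq_sqrt hc] at this
  linarith

lemma abs_bumpLogDeriv_le (hr : 0 < r) (hc₀ : 0 ≤ c) (hc₁ : c < 1) (ha : |a| ≤ √c * r) :
    |bumpLogDeriv r a| ≤ 2 * √c / ((1 - c) ^ 2 * r) := by
  have hgap := one_sub_mul_sq_le_sq_sub_sq hc₀ ha
  have hpos : 0 < (1 - c) * r ^ 2 := by have := sub_pos.2 hc₁; positivity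
  calc |bumpLogDeriv r a| = 2 * r ^ 2 * |a| / (r ^ 2 - a ^ 2) ^ 2 := by
        rw [bumpLogDeriv, abs_div, abs_mul, abs_of_nonneg (sq_nonneg (r ^ 2 - a ^ 2))]
        simp [abs_of_pos hr]
    _ ≤ 2 * r ^ 2 * (√c * r) / ((1 - c) * r ^ 2) ^ 2 := by gcongr
    _ = 2 * √c / ((1 - c) ^ 2 * r) := by field_simp

lemma neg_le_bumpLogDerivDeriv (hr : 0 < r) (hc₀ : 0 ≤ c) (hc₁ : c < 1) (ha : |a| ≤ √c * r) :
    -(2 * (2 * c + 1) / ((1 - c) ^ 4 * r ^ 2)) ≤ bumpLogDerivDeriv r a := by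
  have hgap := one_sub_mul_sq_le_sq_sub_sq hc₀ ha
  have hc : 0 < 1 - c := sub_pos.2 hc₁
  have ha2 : r ^ 2 + 3 * a ^ 2 ≤ (1 + 3 * c) * r ^ 2 := by linarith
  calc -(2 * (2 * c + 1) / ((1 - c) ^ 4 * r ^ 2))
      ≤ -(2 * (1 + 3 * c) / ((1 - c) ^ 3 * r ^ 2)) := by
        rw [neg_le_neg_iff, div_le_div_iff₀ (by positivity) (by positivity)]
        nlinarith [pow_pos hc 3, sq_nonneg c, mul_pos (pow_pos hc 3) (pow_pos hr 2)]
    _ = -(2 * r ^ 2 * ((1 + 3 * c) * r ^ 2) / ((1 - c) * r ^ 2) ^ 3) := by field_simp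
    _ ≤ -(2 * r ^ 2 * (r ^ 2 + 3 * a ^ 2) / (r ^ 2 - a ^ 2) ^ 3) := by gcongr
    _ = bumpLogDerivDeriv r a := by rw [bumpLogDerivDeriv]; ring

end Bump

section Mollifier

open Filter Topology

variable {d : ℕ} {r : ℝ} {x₀ z : EuclideanSpace ℝ (Fin d)}

lemma moll_nonneg (x : EuclideanSpace ℝ (Fin d)) : 0 ≤ moll r x₀ x := by
  unfold moll
  split_ifs <;> positivity

lemma moll_eq_prod_erase_mul_bump (hz : ∀ j, |(z - x₀) j| < r) (k : Fin d) :
    moll r x₀ z = (∏ j ∈ univ.erase k, bump r ((z - x₀) j)) * bump r ((z - x₀) k) := by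
  rw [moll, if_pos hz, ← prod_erase_mul _ _ (mem_univ k)]
  rfl

lemma add_smul_single_sub_apply (k j : Fin d) (t : ℝ) :
    (z + t • EuclideanSpace.single k 1 - x₀ : EuclideanSpace ℝ (Fin d)) j =
      (z - x₀) j + if j = k then t else 0 := by
  simp only [PiLp.sub_apply, PiLp.add_apply, PiLp.smul_apply, PiLp.single_apply, smul_eq_mul]
  split_ifs <;> ring

lemma isOpen_setOf_forall_abs_sub_lt (r : ℝ) (x₀ : EuclideanSpace ℝ (Fin d)) :
    IsOpen {x : EuclideanSpace ℝ (Fin d) | ∀ j, |(x - x₀) j| < r} := by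
  simp only [Set.ofPred_forall]
  exact isOpen_iInter_of_finite fun j => isOpen_lt (by fun_prop) continuous_const

lemma eventually_forall_abs_add_smul_single_sub_lt (hz : ∀ j, |(z - x₀) j| < r) (k : Fin d) :
    ∀ᶠ t in 𝓝 (0 : ℝ),
      ∀ j, |(z + t • EuclideanSpace.single k 1 - x₀ : EuclideanSpace ℝ (Fin d)) j| < r := by
  have hcont : Continuous fun t : ℝ => z + t • EuclideanSpace.single k (1 : ℝ) := by fun_prop
  exact hcont.tendsto' 0 z (by simp) |>.eventually <|
    (isOpen_setOf_forall_abs_sub_lt r x₀).mem_nhds hz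

lemma moll_add_smul_single_eventuallyEq (hz : ∀ j, |(z - x₀) j| < r) (k : Fin d) :
    (fun t : ℝ => moll r x₀ (z + t • EuclideanSpace.single k 1)) =ᶠ[𝓝 0]
      fun t => (∏ j ∈ univ.erase k, bump r ((z - x₀) j)) * bump r ((z - x₀) k + t) := by
  filter_upwards [eventually_forall_abs_add_smul_single_sub_lt hz k] with t ht
  rw [moll_eq_prod_erase_mul_bump ht k, add_smul_single_sub_apply, if_pos rfl]
  congr 1
  refine prod_congr rfl fun j hj => ?_
  rw [add_smul_single_sub_apply, if_neg (ne_of_mem_erase hj), add_zero]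

lemma sq_sub_sq_ne_zero_of_abs_lt {a : ℝ} (h : |a| < r) : r ^ 2 - a ^ 2 ≠ 0 := by
  have := sq_lt_sq' (neg_lt_of_abs_lt h) (lt_of_abs_lt h)
  linarith

lemma hasLineDerivAt_moll (hz : ∀ j, |(z - x₀) j| < r) (k : Fin d) :
    HasLineDerivAt ℝ (moll r x₀) (moll r x₀ z * bumpLogDeriv r ((z - x₀) k)) z
      (EuclideanSpace.single k 1) := by
  refine HasDerivAt.congr_of_eventuallyEq ?_ (moll_add_smul_single_eventuallyEq hz k)
  rw [moll_eq_prod_erase_mul_bump hz k, mul_assoc]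
  refine HasDerivAt.const_mul _ (HasDerivAt.comp_const_add _ 0 ?_)
  rw [add_zero]
  exact hasDerivAt_bump (sq_sub_sq_ne_zero_of_abs_lt (hz k))

lemma hasLineDerivAt_lineDeriv_moll (hz : ∀ j, |(z - x₀) j| < r) (k : Fin d) :
    HasLineDerivAt ℝ (fun x => lineDeriv ℝ (moll r x₀) x (EuclideanSpace.single k 1))
      (moll r x₀ z * (bumpLogDeriv r ((z - x₀) k) ^ 2 + bumpLogDerivDeriv r ((z - x₀) k))) z
      (EuclideanSpace.single k 1) := by
  have heq : (fun t : ℝ => lineDeriv ℝ (moll r x₀) (z + t • EuclideanSpace.single k 1)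
      (EuclideanSpace.single k 1)) =ᶠ[𝓝 0] fun t =>
        moll r x₀ (z + t • EuclideanSpace.single k 1) * bumpLogDeriv r ((z - x₀) k + t) := by
    filter_upwards [eventually_forall_abs_add_smul_single_sub_lt hz k] with t ht
    rw [(hasLineDerivAt_moll ht k).lineDeriv, add_smul_single_sub_apply, if_pos rfl]
  have hlog : HasDerivAt (fun t => bumpLogDeriv r ((z - x₀) k + t))
      (bumpLogDerivDeriv r ((z - x₀) k)) 0 := by
    refine HasDerivAt.comp_const_add _ 0 ?_
    rw [add_zero]
    exact hasDerivAt_bumpLogDeriv (sq_sub_sq_ne_zero_of_abs_lt (hz k))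
  refine HasDerivAt.congr_of_eventuallyEq ?_ heq
  refine ((hasLineDerivAt_moll hz k).mul hlog).congr_deriv ?_
  simp only [zero_smul, add_zero]
  ring

variable {c b B : ℝ} {k : Fin d}

lemma le_neg_mul_mul_lineDeriv_moll {lam : ℝ} (hz : ∀ j, |(z - x₀) j| < r) (hlam : 0 ≤ lam)
    (hc₀ : 0 ≤ c) (hc₁ : c < 1) (hk : |(z - x₀) k| ≤ √c * r) (hb : |b| ≤ B) :
    -(2 * lam * B * √c / ((1 - c) ^ 2 * r)) * moll r x₀ z ≤
      -lam * b * lineDeriv ℝ (moll r x₀) z (EuclideanSpace.single k 1) := by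
  have hB : 0 ≤ B := (abs_nonneg _).trans hb
  have hφ : 0 ≤ moll r x₀ z := moll_nonneg z
  have hlog := abs_bumpLogDeriv_le ((abs_nonneg _).trans_lt (hz k)) hc₀ hc₁ hk
  set h := bumpLogDeriv r ((z - x₀) k)
  rw [(hasLineDerivAt_moll hz k).lineDeriv]
  calc -(2 * lam * B * √c / ((1 - c) ^ 2 * r)) * moll r x₀ z
      = -(lam * B * (2 * √c / ((1 - c) ^ 2 * r))) * moll r x₀ z := by ring
    _ ≤ -(lam * |b| * |h|) * moll r x₀ z := by gcongr
    _ = -|lam * b * h| * moll r x₀ z := by rw [abs_mul, abs_mul, abs_of_nonneg hlam]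
    _ ≤ -(lam * b * h) * moll r x₀ z := by gcongr; exact le_abs_self _
    _ = -lam * b * (moll r x₀ z * h) := by ring

lemma le_mul_lineDeriv_lineDeriv_moll (σ : ℝ) (hz : ∀ j, |(z - x₀) j| < r) (hc₀ : 0 ≤ c)
    (hc₁ : c < 1) (hk : |(z - x₀) k| ≤ √c * r) (hb : |b| ≤ B) :
    -(σ ^ 2 * B ^ 2 * (2 * c + 1) / ((1 - c) ^ 4 * r ^ 2)) * moll r x₀ z ≤
      σ ^ 2 / 2 * b ^ 2 * lineDeriv ℝ (fun x => lineDeriv ℝ (moll r x₀) x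
        (EuclideanSpace.single k 1)) z (EuclideanSpace.single k 1) := by
  have hφ : 0 ≤ moll r x₀ z := moll_nonneg z
  have hb2 : b ^ 2 ≤ B ^ 2 := sq_le_sq' (neg_le_of_abs_le hb) (le_of_abs_le hb)
  set K := 2 * (2 * c + 1) / ((1 - c) ^ 4 * r ^ 2)
  have hK : 0 ≤ K := by
    have := sub_pos.2 hc₁
    positivity
  have hK' : -K ≤ bumpLogDerivDeriv r ((z - x₀) k) :=
    neg_le_bumpLogDerivDeriv ((abs_nonneg _).trans_lt (hz k)) hc₀ hc₁ hk
  rw [(hasLineDerivAt_lineDeriv_moll hz k).lineDeriv]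
  calc -(σ ^ 2 * B ^ 2 * (2 * c + 1) / ((1 - c) ^ 4 * r ^ 2)) * moll r x₀ z
      = -(σ ^ 2 / 2 * B ^ 2 * K * moll r x₀ z) := by ring
    _ ≤ -(σ ^ 2 / 2 * b ^ 2 * K * moll r x₀ z) := by gcongr
    _ = σ ^ 2 / 2 * b ^ 2 * (moll r x₀ z * -K) := by ring
    _ ≤ σ ^ 2 / 2 * b ^ 2 * (moll r x₀ z * bumpLogDerivDeriv r ((z - x₀) k)) := by gcongr
    _ ≤ σ ^ 2 / 2 * b ^ 2 * (moll r x₀ z *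
          (bumpLogDeriv r ((z - x₀) k) ^ 2 + bumpLogDerivDeriv r ((z - x₀) k))) := by
      gcongr
      exact le_add_of_nonneg_left (sq_nonneg _)

end Mollifier

theorem stmt12_general {d : ℕ} (c r lam σ M : ℝ)
    (hc : c ∈ Set.Ioo (1 / 2 : ℝ) 1) (hlam : 0 < lam)
    (x₀ v y : EuclideanSpace ℝ (Fin d))
    (hball : ∀ j, |(y - x₀) j| < r) (k : Fin d)
    (hk1 : |(y - x₀) k| ≤ Real.sqrt c * r)
    (hk2 : |(y - v) k| ≤ Real.sqrt c * r + M) :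
    -lam * ((y - v) k) * lineDeriv ℝ (moll r x₀) y (EuclideanSpace.single k 1) ≥
      -(2 * lam * (Real.sqrt c * r + M) * Real.sqrt c / ((1 - c) ^ 2 * r)) *
        moll r x₀ y ∧
    σ ^ 2 / 2 * ((y - v) k) ^ 2 *
        lineDeriv ℝ (fun z => lineDeriv ℝ (moll r x₀) z (EuclideanSpace.single k 1)) y
          (EuclideanSpace.single k 1) ≥
      -(σ ^ 2 * (Real.sqrt c * r + M) ^ 2 * (2 * c + 1) / ((1 - c) ^ 4 * r ^ 2)) *
        moll r x₀ y := by
  have hc₀ : 0 ≤ c := by linarith [hc.1]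
  exact ⟨le_neg_mul_mul_lineDeriv_moll hball hlam.le hc₀ hc.2 hk1 hk2,
    le_mul_lineDeriv_lineDeriv_moll σ hball hc₀ hc.2 hk1 hk2⟩

/-- **drift-diffusion lower bound on region `K₁ᶜ`.**
For `c ∈ (1/2,1)`, `|(y−x₀)_k| ≤ √c r` and `|(y−v)_k| ≤ √c r + M`, one has
`−λ(y−v)_k ∂_{x_k}φ_r(y) ≥ −(2λ(√c r + M)√c/((1−c)² r)) φ_r(y)` and
`(σ²/2)(y−v)_k² ∂²_{x_k}φ_r(y) ≥ −(σ²(√c r + M)²(2c+1)/((1−c)⁴ r²)) φ_r(y)`. -/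
theorem stmt12 {d : ℕ} (c r lam σ M : ℝ)
    (hc : c ∈ Set.Ioo (1 / 2 : ℝ) 1) (hr : 0 < r) (hlam : 0 < lam) (hσ : 0 < σ)
    (hM : 0 < M) (x₀ v y : EuclideanSpace ℝ (Fin d))
    (hball : ∀ j, |(y - x₀) j| < r) (k : Fin d)
    (hk1 : |(y - x₀) k| ≤ Real.sqrt c * r)
    (hk2 : |(y - v) k| ≤ Real.sqrt c * r + M) :
    -lam * ((y - v) k) * lineDeriv ℝ (moll r x₀) y (EuclideanSpace.single k 1) ≥
      -(2 * lam * (Real.sqrt c * r + M) * Real.sqrt c / ((1 - c) ^ 2 * r)) *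
        moll r x₀ y ∧
    σ ^ 2 / 2 * ((y - v) k) ^ 2 *
        lineDeriv ℝ (fun z => lineDeriv ℝ (moll r x₀) z (EuclideanSpace.single k 1)) y
          (EuclideanSpace.single k 1) ≥
      -(σ ^ 2 * (Real.sqrt c * r + M) ^ 2 * (2 * c + 1) / ((1 - c) ^ 4 * r ^ 2)) *
        moll r x₀ y :=
  stmt12_general c r lam σ M hc hlam x₀ v y hball k hk1 hk2
end
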